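/- arXiv:2007.06941 — 4 statements merged into one kernel-verified Lean document; each statement's English description precedes it below -/
import Mathlib

section
/- If φ is a safety property and s₁, s₂ are strategies for components p₁ and p₂ with disjoint output sets such that s₁ is dominant for φ and p₁ and s₂ is dominant for φ and p₂, then the parallel composition s₁ ∥ s₂ is dominant for φ and the combined component p₁ ∥ p₂ (whose outputs are out(p₁) ∪ out(p₂)). -/
open scoped Classical

/-- A trace assigns to each time step a valuation of the variables. -/
abbrev Trace (V : Type) := ℕ → V → Bool

/-- A (strictly causal) strategy maps a finite history of valuations to an output valuation. -/
abbrev Strat (V : Type) := List (V → Bool) → (V → Bool)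

/-- The history of the closed-loop trace of strategy `s` (controlling the variables in `O`)
on input `γ`, up to (excluding) step `n`. -/
noncomputable def histSeq {V : Type} (O : Set V) (s : Strat V) (γ : Trace V) : ℕ → List (V → Bool)
  | 0 => []
  | n + 1 => histSeq O s γ n ++ [fun v => if v ∈ O then s (histSeq O s γ n) v else γ n v]

/-- The computation of strategy `s` (controlling `O`) on input sequence `γ`. -/
noncomputable def comp {V : Type} (O : Set V) (s : Strat V) (γ : Trace V) : Trace V :=
  fun n v => if v ∈ O then s (histSeq O s γ n) v else γ n v

/-- `s` is winning for `φ` (as a strategy for the outputs `O`). -/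
def Winning {V : Type} (O : Set V) (φ : Set (Trace V)) (s : Strat V) : Prop :=
  ∀ γ : Trace V, comp O s γ ∈ φ

/-- `t` dominates `s` for `φ` (strategies for `O`). -/
def Dominates {V : Type} (O : Set V) (φ : Set (Trace V)) (t s : Strat V) : Prop :=
  ∀ γ : Trace V, comp O s γ ∈ φ → comp O t γ ∈ φ

/-- `s` is dominant for `φ` and the component with outputs `O`. -/
def Dominant {V : Type} (O : Set V) (φ : Set (Trace V)) (s : Strat V) : Prop :=
  ∀ t : Strat V, Dominates O φ s t

/-- Parallel composition of strategies: `s₁` controls `O₁`, `s₂` the rest of the joint outputs. -/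
noncomputable def par {V : Type} (O₁ : Set V) (s₁ s₂ : Strat V) : Strat V :=
  fun h v => if v ∈ O₁ then s₁ h v else s₂ h v

/-- `φ` is a safety property: every violation has a finite bad prefix. -/
def Safety {V : Type} (φ : Set (Trace V)) : Prop :=
  ∀ σ : Trace V, σ ∉ φ → ∃ n : ℕ, ∀ σ' : Trace V, (∀ m ≤ n, σ' m = σ m) → σ' ∉ φ

/-- Membership in `φ` depends only on the variables in `W`. -/
def DependsOnlyOn {V : Type} (φ : Set (Trace V)) (W : Set V) : Prop :=
  ∀ σ σ' : Trace V, (∀ n : ℕ, ∀ v ∈ W, σ n v = σ' n v) → (σ ∈ φ ↔ σ' ∈ φ)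

lemma histSeq_eq {V : Type} (O : Set V) (s : Strat V) (γ : Trace V) (n : ℕ) :
    histSeq O s γ n = (List.range n).map (fun m => comp O s γ m) := by
  induction n with
  | zero => rfl
  | succ n ih =>
    rw [histSeq, ih, List.range_succ, List.map_append]
    congr 1
    rw [← ih]
    rfl

lemma histSeq_length {V : Type} (O : Set V) (s : Strat V) (γ : Trace V) (n : ℕ) :
    (histSeq O s γ n).length = n := by
  simp [histSeq_eq]

lemma comp_playback {V : Type} (O : Set V) (ρ : Trace V) :
    comp O (fun h => ρ h.length) ρ = ρ := by
  funext n v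
  simp [comp, histSeq_length]

lemma comp_prefix {V : Type} (O Op : Set V) (s sp : Strat V) (ρ γ : Trace V)
    (hsub : O ⊆ Op) (hpt : ∀ h v, v ∈ O → s h v = sp h v) (k : ℕ)
    (hag : ∀ m < k, ρ m = comp Op sp γ m) :
    ∀ m ≤ k, ∀ v ∈ O, comp O s ρ m v = comp Op sp γ m v := by
  intro m
  induction m using Nat.strong_induction_on with
  | _ m ih =>
    intro hm v hv
    have hhist : histSeq O s ρ m = histSeq Op sp γ m := by
      rw [histSeq_eq, histSeq_eq]
      apply List.map_congr_left
      intro j hj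
      rw [List.mem_range] at hj
      funext v'
      by_cases hv' : v' ∈ O
      · exact ih j hj (le_of_lt (lt_of_lt_of_le hj hm)) v' hv'
      · have : comp O s ρ j v' = ρ j v' := by simp [comp, hv']
        rw [this, hag j (lt_of_lt_of_le hj hm)]
    show (if v ∈ O then s (histSeq O s ρ m) v else ρ m v)
        = (if v ∈ Op then sp (histSeq Op sp γ m) v else γ m v)
    rw [if_pos hv, if_pos (hsub hv), hhist, hpt]
    exact hv

/-- for safety properties, the parallel composition of dominant strategies for
output-disjoint components is dominant for the combined component. -/
theorem stmt2 (V : Type) (O₁ O₂ : Set V) (hdisj : Disjoint O₁ O₂)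
    (φ : Set (Trace V)) (hsafe : Safety φ) (s₁ s₂ : Strat V)
    (h₁ : Dominant O₁ φ s₁) (h₂ : Dominant O₂ φ s₂) :
    Dominant (O₁ ∪ O₂) φ (par O₁ s₁ s₂) := by
  intro t γ ht
  set Op : Set V := O₁ ∪ O₂ with hOp
  set sp : Strat V := par O₁ s₁ s₂ with hsp
  set σ : Trace V := comp Op sp γ with hσdef
  by_contra hσ
  obtain ⟨n, hn⟩ := hsafe σ hσ
  -- pointwise facts about `par`
  have hpt₁ : ∀ (h : List (V → Bool)) v, v ∈ O₁ → s₁ h v = sp h v := by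
    intro h v hv; simp [hsp, par, hv]
  have hpt₂ : ∀ (h : List (V → Bool)) v, v ∈ O₂ → s₂ h v = sp h v := by
    intro h v hv
    have hv1 : v ∉ O₁ := Set.disjoint_right.mp hdisj hv
    simp [hsp, par, hv1]
  have hsub₁ : O₁ ⊆ Op := Set.subset_union_left
  have hsub₂ : O₂ ⊆ Op := Set.subset_union_right
  -- main induction: for each k there is a φ-trace with the right environment agreeing
  -- with σ on the first k steps
  have claim : ∀ k : ℕ, ∃ ρ : Trace V, ρ ∈ φ ∧
      (∀ m v, v ∉ Op → ρ m v = γ m v) ∧ (∀ m < k, ρ m = σ m) := by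
    intro k
    induction k with
    | zero =>
      refine ⟨comp Op t γ, ht, fun m v hv => by simp [comp, hv], fun m hm => by omega⟩
    | succ k ih =>
      obtain ⟨ρ, hρφ, hρe, hρa⟩ := ih
      -- apply s₁
      set ρ' : Trace V := comp O₁ s₁ ρ with hρ'def
      have hρ'φ : ρ' ∈ φ := by
        have hp := comp_playback O₁ ρ
        exact h₁ (fun h => ρ h.length) ρ (by rw [hp]; exact hρφ)
      have key₁ := comp_prefix O₁ Op s₁ sp ρ γ hsub₁ hpt₁ k hρa
      have hρ'a : ∀ m < k, ρ' m = σ m := by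
        intro m hm
        funext v
        by_cases hv : v ∈ O₁
        · exact key₁ m (le_of_lt hm) v hv
        · have : ρ' m v = ρ m v := by simp [hρ'def, comp, hv]
          rw [this, hρa m hm]
      have hρ'out : ∀ v, v ∉ O₁ → ∀ m, ρ' m v = ρ m v := by
        intro v hv m; simp [hρ'def, comp, hv]
      -- apply s₂
      set ρ'' : Trace V := comp O₂ s₂ ρ' with hρ''def
      have hρ''φ : ρ'' ∈ φ := by
        have hp := comp_playback O₂ ρ'
        exact h₂ (fun h => ρ' h.length) ρ' (by rw [hp]; exact hρ'φ)
      have key₂ := comp_prefix O₂ Op s₂ sp ρ' γ hsub₂ hpt₂ k hρ'a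
      have hρ''out : ∀ v, v ∉ O₂ → ∀ m, ρ'' m v = ρ' m v := by
        intro v hv m; simp [hρ''def, comp, hv]
      refine ⟨ρ'', hρ''φ, ?_, ?_⟩
      · intro m v hv
        have hv2 : v ∉ O₂ := fun h => hv (hsub₂ h)
        have hv1 : v ∉ O₁ := fun h => hv (hsub₁ h)
        rw [hρ''out v hv2 m, hρ'out v hv1 m, hρe m v hv]
      · intro m hm
        funext v
        by_cases hv2 : v ∈ O₂
        · exact key₂ m (by omega) v hv2
        · rw [hρ''out v hv2 m]
          by_cases hv1 : v ∈ O₁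
          · exact key₁ m (by omega) v hv1
          · have hv : v ∉ Op := by
              simp [hOp, hv1, hv2]
            rw [hρ'out v hv1 m, hρe m v hv]
            show γ m v = σ m v
            simp [hσdef, comp, hv]
  obtain ⟨ρ, hρφ, _, hρa⟩ := claim (n + 1)
  exact hn ρ (fun m hm => hρa m (by omega)) hρφ
end

section
/- Let φ be a specification over variables V \ out(p) (membership in φ is independent of out(p)) and ψ a specification over V. If ψ is admissible for component p (some dominant strategy for ψ and p exists), then φ ∩ ψ is admissible for p; in fact, any strategy dominant for ψ and p is dominant for φ ∩ ψ and p. -/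
open scoped Classical

/-- if `φ` depends only on `V \ out(p)` and `ψ` is admissible for `p`, then
`φ ∩ ψ` is admissible for `p`; in fact every strategy dominant for `ψ` and `p` is dominant
for `φ ∩ ψ` and `p`. -/
theorem stmt7 (V : Type) (O : Set V) (φ ψ : Set (Trace V))
    (hφ : DependsOnlyOn φ Oᶜ) :
    (∀ s : Strat V, Dominant O ψ s → Dominant O (φ ∩ ψ) s) ∧
    ((∃ s : Strat V, Dominant O ψ s) → ∃ s : Strat V, Dominant O (φ ∩ ψ) s) := by
  have key : ∀ s : Strat V, Dominant O ψ s → Dominant O (φ ∩ ψ) s := by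
    intro s hs t γ ht
    have hφeq : ∀ (a b : Strat V), comp O a γ ∈ φ ↔ comp O b γ ∈ φ := by
      intro a b
      apply hφ
      intro n v hv
      simp [comp, show v ∉ O from hv]
    exact ⟨(hφeq s t).mpr ht.1, hs t γ ht.2⟩
  exact ⟨key, fun ⟨s, hs⟩ => ⟨s, key s hs⟩⟩
end

section
/- Universal projection preserves universal acceptance semantics: for a universal co-Büchi automaton A over alphabet 2^{Σ₁ ∪ Σ₂} (Σ₁, Σ₂ disjoint) and its universal projection A₁ to Σ₁ (with transitions (q, a, q') whenever there exists b ⊆ Σ₂ with (q, a ∪ b, q') a transition of A), a word σ ∈ (2^{Σ₁})^ω is accepted by A₁ if and only if for every word τ ∈ (2^{Σ₂})^ω, the combined word (σᵢ ∪ τᵢ)ᵢ is accepted by A. -/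
/-- A universal co-Büchi automaton with states `Q` and alphabet `A`. -/
structure UCB (Q A : Type) where
  init : Q
  δ : Q → A → Q → Prop
  F : Set Q

/-- `r` is a run of the word `w` on `M`. -/
def IsRun {Q A : Type} (M : UCB Q A) (w : ℕ → A) (r : ℕ → Q) : Prop :=
  r 0 = M.init ∧ ∀ n : ℕ, M.δ (r n) (w n) (r (n + 1))

/-- `M` accepts `w`: every run visits the rejecting states only finitely often. -/
def Accepts {Q A : Type} (M : UCB Q A) (w : ℕ → A) : Prop :=
  ∀ r : ℕ → Q, IsRun M w r → {n : ℕ | r n ∈ M.F}.Finite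

/-- `M` is complete: every state has a successor on every letter. -/
def Complete {Q A : Type} (M : UCB Q A) : Prop :=
  ∀ (q : Q) (a : A), ∃ q' : Q, M.δ q a q'

/-- Universal projection of `M` (alphabet `2^(S₁ ∪ S₂)`) to the letters over `S₁`. -/
def proj {Q Alph : Type} (S₁ S₂ : Set Alph) (M : UCB Q (Set Alph)) : UCB Q (Set Alph) where
  init := M.init
  δ := fun q a q' => a ⊆ S₁ ∧ ∃ b ⊆ S₂, M.δ q (a ∪ b) q'
  F := M.F

/-- universal projection preserves universal acceptance semantics: a word over
`2^S₁` is accepted by the projection iff for every word `τ` over `2^S₂` the combined word is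
accepted by `M`. -/
theorem stmt9 (Q Alph : Type) [Finite Q] (S₁ S₂ : Set Alph)
    (hdisj : Disjoint S₁ S₂) (hcover : S₁ ∪ S₂ = Set.univ)
    (M : UCB Q (Set Alph)) (hcomp : Complete M)
    (σ : ℕ → Set Alph) (hσ : ∀ n, σ n ⊆ S₁) :
    Accepts (proj S₁ S₂ M) σ ↔
      ∀ τ : ℕ → Set Alph, (∀ n, τ n ⊆ S₂) → Accepts M (fun n => σ n ∪ τ n) := by
  constructor
  · intro h τ hτ r hr
    exact h r ⟨hr.1, fun n => ⟨hσ n, τ n, hτ n, hr.2 n⟩⟩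
  · intro h r hr
    choose b hb hδ using fun n => (hr.2 n).2
    exact h b hb r ⟨hr.1, hδ⟩
end

section
/- If there exist winning strategies for output-disjoint components p and p' for specifications ψ and ψ' respectively, where ψ depends only on V \ out(p') and ψ' depends only on V \ out(p), then their parallel composition is winning for ψ ∩ ψ'. Conversely, if ψ ∩ ψ' is realizable for the whole system p ∥ p', then ψ is realizable for p alone and ψ' is realizable for p' alone. -/
open scoped Classical

/-- Replace the `O`-part of each history entry by what `s` would output. -/
noncomputable def trGo {V : Type} (O : Set V) (s : Strat V) : List (V → Bool) → List (V → Bool)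
  | [] => []
  | a :: r => trGo O s r ++ [fun v => if v ∈ O then s (trGo O s r) v else a v]

noncomputable def tr {V : Type} (O : Set V) (s : Strat V) (l : List (V → Bool)) :
    List (V → Bool) :=
  trGo O s l.reverse

lemma tr_nil {V : Type} (O : Set V) (s : Strat V) : tr O s [] = [] := rfl

lemma tr_append {V : Type} (O : Set V) (s : Strat V) (l : List (V → Bool)) (a : V → Bool) :
    tr O s (l ++ [a]) = tr O s l ++ [fun v => if v ∈ O then s (tr O s l) v else a v] := by
  simp [tr, trGo]

/-- The simulated history of the component strategy equals the joint history. -/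
lemma tr_hist {V : Type} (O O' : Set V) (s : Strat V) (γ : Trace V) :
    ∀ n, tr O' s (histSeq O (fun h => s (tr O' s h)) γ n) = histSeq (O ∪ O') s γ n := by
  intro n
  induction n with
  | zero => rfl
  | succ n ih =>
    rw [histSeq, histSeq, tr_append, ih]
    congr 2
    funext v
    by_cases h1 : v ∈ O <;> by_cases h2 : v ∈ O' <;>
      simp [h1, h2, Set.mem_union]

lemma comp_restrict {V : Type} (O O' : Set V) (s : Strat V) (γ : Trace V) :
    ∀ n, ∀ v ∈ O'ᶜ, comp O (fun h => s (tr O' s h)) γ n v = comp (O ∪ O') s γ n v := by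
  intro n v hv
  simp only [comp, tr_hist]
  by_cases h1 : v ∈ O <;> simp_all [Set.mem_union]

/-- winning strategies for output-disjoint components for `ψ` (depending only on
`V \ O₂`) and `ψ'` (depending only on `V \ O₁`) compose to a winning strategy for `ψ ∩ ψ'`;
conversely, realizability of `ψ ∩ ψ'` for the whole system yields realizability of `ψ` for
`p` and of `ψ'` for `p'`. -/
theorem stmt12 (V : Type) (inp O₁ O₂ : Set V)
    (h12 : Disjoint O₁ O₂) (hi1 : Disjoint inp O₁) (hi2 : Disjoint inp O₂)
    (hV : inp ∪ O₁ ∪ O₂ = Set.univ)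
    (ψ ψ' : Set (Trace V))
    (hψ : DependsOnlyOn ψ O₂ᶜ) (hψ' : DependsOnlyOn ψ' O₁ᶜ) :
    (∀ s₁ s₂ : Strat V, Winning O₁ ψ s₁ → Winning O₂ ψ' s₂ →
        Winning (O₁ ∪ O₂) (ψ ∩ ψ') (par O₁ s₁ s₂)) ∧
    ((∃ s : Strat V, Winning (O₁ ∪ O₂) (ψ ∩ ψ') s) →
        (∃ s₁ : Strat V, Winning O₁ ψ s₁) ∧ (∃ s₂ : Strat V, Winning O₂ ψ' s₂)) := by
  constructor
  · intro s₁ s₂ hw1 hw2 γ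
    set P := par O₁ s₁ s₂ with hP
    set σ := comp (O₁ ∪ O₂) P γ with hσ
    have hσn : ∀ n (v : V), σ n v =
        if v ∈ O₁ ∪ O₂ then P (histSeq (O₁ ∪ O₂) P γ n) v else γ n v := fun n v => by rw [hσ]; simp [comp]
    have h1 : ∀ n, histSeq O₁ s₁ σ n = histSeq (O₁ ∪ O₂) P γ n := by
      intro n
      induction n with
      | zero => rfl
      | succ n ih =>
        rw [histSeq, histSeq, ih]
        congr 2
        funext v
        by_cases hv : v ∈ O₁
        · simp [hv, hσn, hP, par, Set.mem_union]
        · simp [hv, hσn]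
    have h2 : ∀ n, histSeq O₂ s₂ σ n = histSeq (O₁ ∪ O₂) P γ n := by
      intro n
      induction n with
      | zero => rfl
      | succ n ih =>
        rw [histSeq, histSeq, ih]
        congr 2
        funext v
        by_cases hv : v ∈ O₂
        · have hv1 : v ∉ O₁ := fun h => (h12.le_bot ⟨h, hv⟩)
          simp [hv, hv1, hσn, hP, par, Set.mem_union]
        · simp [hv, hσn]
    have e1 : comp O₁ s₁ σ = σ := by
      funext n v
      simp only [comp, h1]
      by_cases hv : v ∈ O₁
      · simp [hv, hσn, hP, par, Set.mem_union]
      · simp [hv]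
    have e2 : comp O₂ s₂ σ = σ := by
      funext n v
      simp only [comp, h2]
      by_cases hv : v ∈ O₂
      · have hv1 : v ∉ O₁ := fun h => (h12.le_bot ⟨h, hv⟩)
        simp [hv, hv1, hσn, hP, par, Set.mem_union]
      · simp [hv]
    exact ⟨e1 ▸ hw1 σ, e2 ▸ hw2 σ⟩
  · rintro ⟨s, hs⟩
    constructor
    · refine ⟨fun h => s (tr O₂ s h), fun γ => ?_⟩
      exact (hψ _ _ (fun n v hv => comp_restrict O₁ O₂ s γ n v hv)).mpr (hs γ).1
    · refine ⟨fun h => s (tr O₁ s h), fun γ => ?_⟩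
      have h2 := comp_restrict O₂ O₁ s γ
      rw [Set.union_comm O₂ O₁] at h2
      exact (hψ' _ _ (fun n v hv => h2 n v hv)).mpr (hs γ).2
end
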